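/- Let g(b) = 1 for b ≥ 2 and g(b) = (4/b²)·e^{b−2} for 0 < b < 2. Then for every real p ≥ 2 and every b with log(2) ≤ b ≤ p, one has b·g(b) ≤ p. Consequently, if G : [0,1)^k → ℝ^P is given by G_i(a) = c_i · ∏_{j=1}^k exp( −b_j^(i)·a_j/(1−a_j) ), where |c_i| ≤ 1 and each nonzero component b_j^(i) lies in the interval [log(2), p] for some p ≥ 2, then G is L-Lipschitz on [0,1)^k with L ≤ p·√(Pk). -/

import Mathlib

/-!
Put `s = t / (1 - t)`. The derivative of `t ↦ exp (-b t / (1 - t))` on `[0, 1)` has absolute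
value `b (1 + s)² e^{-bs}`, whose supremum over `s ≥ 0` is `b g(b)`. Convexity of `exp` gives
`2 e^{b-2} ≤ b` on `[log 2, 2]`, hence `b g(b) ≤ max b 2 ≤ p`. So every factor of `G_i` is
`p`-Lipschitz in its coordinate and bounded by `1`; a product of such factors is `p`-Lipschitz
for the `ℓ¹` distance, and Cauchy–Schwarz passes from `ℓ¹` to `ℓ²` at the cost of `√k` on the
inputs and `√P` on the outputs.
-/

noncomputable section

/-- Euclidean norm of a vector in `ℝ^n`. -/
def norm2 {n : ℕ} (x : Fin n → ℝ) : ℝ := Real.sqrt (∑ i, x i ^ 2)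

/-- The box `[0,1)^k`. -/
def box (k : ℕ) : Set (Fin k → ℝ) := {a | ∀ j, a j ∈ Set.Ico (0 : ℝ) 1}

/-- `g(b) = 1` for `b ≥ 2`, and `g(b) = (4/b²) e^{b-2}` for `0 < b < 2`. -/
def gaux (b : ℝ) : ℝ := if 2 ≤ b then 1 else 4 / b ^ 2 * Real.exp (b - 2)

open Real Finset

lemma one_add_sq_le_exp_two_mul {s : ℝ} (hs : -1 ≤ s) : (1 + s) ^ 2 ≤ exp (2 * s) := by
  calc (1 + s) ^ 2 ≤ exp s ^ 2 :=
        pow_le_pow_left₀ (by linarith) (by linarith [add_one_le_exp s]) 2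
    _ = exp (2 * s) := by rw [← exp_nat_mul]; norm_num

lemma sq_le_four_mul_exp_sub_two {u : ℝ} (hu : 0 ≤ u) : u ^ 2 ≤ 4 * exp (u - 2) := by
  have h : u / 2 ≤ exp (u / 2 - 1) := by linarith [add_one_le_exp (u / 2 - 1)]
  calc u ^ 2 = 4 * (u / 2) ^ 2 := by ring
    _ ≤ 4 * exp (u / 2 - 1) ^ 2 := by gcongr
    _ = 4 * exp (u - 2) := by rw [← exp_nat_mul]; congr 2; push_cast; ring

/-- `gaux b` is the supremum of the left side over `s ≥ 0`: it is attained at `s = 0` if `b ≥ 2`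
and at `s = 2 / b - 1` otherwise. -/
lemma sq_one_add_mul_exp_neg_le_gaux {b s : ℝ} (hb : 0 < b) (hs : 0 ≤ s) :
    (1 + s) ^ 2 * exp (-(b * s)) ≤ gaux b := by
  unfold gaux
  split_ifs with h2
  · calc (1 + s) ^ 2 * exp (-(b * s)) ≤ exp (2 * s) * exp (-(b * s)) := by
          gcongr; exact one_add_sq_le_exp_two_mul (by linarith)
      _ = exp (-((b - 2) * s)) := by rw [← exp_add]; ring_nf
      _ ≤ 1 := exp_le_one_iff.2 (by nlinarith)
  · have hu := sq_le_four_mul_exp_sub_two (u := b * (1 + s)) (by positivity)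
    calc (1 + s) ^ 2 * exp (-(b * s))
        = (b * (1 + s)) ^ 2 * exp (b - b * (1 + s)) / b ^ 2 := by field_simp; ring_nf
      _ ≤ 4 * exp (b * (1 + s) - 2) * exp (b - b * (1 + s)) / b ^ 2 := by gcongr
      _ = 4 / b ^ 2 * exp (b - 2) := by rw [mul_assoc, ← exp_add]; ring_nf

lemma convexOn_two_mul_exp_sub_two_sub_id :
    ConvexOn ℝ Set.univ fun b : ℝ => 2 * exp (b - 2) - b := by
  have h : ConvexOn ℝ Set.univ fun b : ℝ => exp (b - 2) := by
    simpa [Function.comp_def, sub_eq_add_neg, add_comm] using convexOn_exp.translate_right (-2)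
  exact (h.smul zero_le_two).sub (concaveOn_id convex_univ)

lemma four_div_exp_two_le_log_two : 4 / exp 2 ≤ log 2 := by
  have he := exp_one_gt_d9
  have hl := log_two_gt_d9
  have h2 : exp 2 = exp 1 * exp 1 := by rw [← exp_add]; norm_num
  rw [h2, div_le_iff₀ (by positivity)]
  nlinarith

lemma two_mul_exp_sub_two_le {b : ℝ} (h1 : log 2 ≤ b) (h2 : b ≤ 2) : 2 * exp (b - 2) ≤ b := by
  -- `2 e^{b-2} - b` is convex and nonpositive at both ends of `[log 2, 2]`
  have hb : b ∈ segment ℝ (log 2) 2 := by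
    rw [segment_eq_Icc (by linarith)]; exact ⟨h1, h2⟩
  have hlog : 2 * exp (log 2 - 2) - log 2 ≤ 0 := by
    rw [exp_sub, exp_log two_pos, mul_div_assoc', show (2 : ℝ) * 2 = 4 by norm_num]
    linarith [four_div_exp_two_le_log_two]
  have := convexOn_two_mul_exp_sub_two_sub_id.le_on_segment (Set.mem_univ _) (Set.mem_univ _) hb
  linarith [this.trans (max_le hlog (by simp))]

lemma mul_gaux_le_max {b : ℝ} (hb : log 2 ≤ b) : b * gaux b ≤ max b 2 := by
  have hb0 : 0 < b := (log_pos one_lt_two).trans_le hb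
  unfold gaux
  split_ifs with h2
  · simp
  · calc b * (4 / b ^ 2 * exp (b - 2)) = 2 * (2 * exp (b - 2)) / b := by
          field_simp; norm_num
      _ ≤ 2 * b / b := by gcongr; exact two_mul_exp_sub_two_le hb (not_le.1 h2).le
      _ = 2 := by field_simp
      _ ≤ max b 2 := le_max_right _ _

lemma norm_prod_sub_prod_le {ι R : Type*} [NormedCommRing R] [NormOneClass R] (s : Finset ι)
    {f g : ι → R} (hf : ∀ i ∈ s, ‖f i‖ ≤ 1) (hg : ∀ i ∈ s, ‖g i‖ ≤ 1) :
    ‖∏ i ∈ s, f i - ∏ i ∈ s, g i‖ ≤ ∑ i ∈ s, ‖f i - g i‖ := by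
  classical
  induction s using Finset.induction_on with
  | empty => simp
  | insert i s hi ih =>
    rw [prod_insert hi, prod_insert hi, sum_insert hi]
    have hF : ‖∏ j ∈ s, f j‖ ≤ 1 := (Finset.norm_prod_le _ _).trans
      (prod_le_one (fun _ _ => norm_nonneg _) fun j hj => hf j (mem_insert_of_mem hj))
    have ih' := ih (fun j hj => hf j (mem_insert_of_mem hj)) fun j hj => hg j (mem_insert_of_mem hj)
    calc ‖f i * ∏ j ∈ s, f j - g i * ∏ j ∈ s, g j‖
        = ‖(f i - g i) * ∏ j ∈ s, f j + g i * (∏ j ∈ s, f j - ∏ j ∈ s, g j)‖ := by ring_nf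
      _ ≤ ‖f i - g i‖ * 1 + 1 * ∑ j ∈ s, ‖f j - g j‖ := by
        refine (norm_add_le _ _).trans (add_le_add ?_ ?_)
        · exact (norm_mul_le _ _).trans (mul_le_mul_of_nonneg_left hF (norm_nonneg _))
        · exact (norm_mul_le _ _).trans
            (mul_le_mul (hg i (mem_insert_self _ _)) ih' (norm_nonneg _) zero_le_one)
      _ = ‖f i - g i‖ + ∑ j ∈ s, ‖f j - g j‖ := by ring

lemma sum_abs_le_sqrt_card_mul_norm2 {k : ℕ} (x : Fin k → ℝ) : ∑ j, |x j| ≤ √k * norm2 x := by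
  have h := sq_sum_le_card_mul_sum_sq (s := univ) (f := fun j => |x j|)
  simp only [card_univ, Fintype.card_fin, sq_abs] at h
  rw [norm2, ← sqrt_mul (Nat.cast_nonneg k)]
  exact le_sqrt_of_sq_le h

lemma norm2_le_sqrt_card_mul {n : ℕ} {x : Fin n → ℝ} {M : ℝ} (hM0 : 0 ≤ M)
    (hM : ∀ i, |x i| ≤ M) : norm2 x ≤ √n * M := by
  have h : ∑ i, x i ^ 2 ≤ n * M ^ 2 := by
    calc ∑ i, x i ^ 2 ≤ ∑ _i : Fin n, M ^ 2 :=
          sum_le_sum fun i _ => sq_le_sq' (abs_le.1 (hM i)).1 (abs_le.1 (hM i)).2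
      _ = n * M ^ 2 := by simp
  calc norm2 x ≤ √(n * M ^ 2) := sqrt_le_sqrt h
    _ = √n * M := by rw [sqrt_mul (Nat.cast_nonneg n), sqrt_sq hM0]

def expDecay (b t : ℝ) : ℝ := exp (-(b * (t / (1 - t))))

lemma abs_expDecay_le_one {b t : ℝ} (hb : 0 ≤ b) (ht : t ∈ Set.Ico 0 1) : |expDecay b t| ≤ 1 := by
  have hs : 0 ≤ t / (1 - t) := div_nonneg ht.1 (by linarith [ht.2])
  rw [expDecay, abs_of_pos (exp_pos _), exp_le_one_iff]
  nlinarith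

lemma hasDerivAt_expDecay (b : ℝ) {t : ℝ} (ht : t ≠ 1) :
    HasDerivAt (expDecay b) (-(b / (1 - t) ^ 2) * expDecay b t) t := by
  have h1t : 1 - t ≠ 0 := sub_ne_zero.2 ht.symm
  have hfrac : HasDerivAt (fun t : ℝ => t / (1 - t)) (1 / (1 - t) ^ 2) t :=
    ((hasDerivAt_id t).div ((hasDerivAt_id t).const_sub 1) h1t).congr_deriv (by simp)
  exact ((hfrac.const_mul b).neg).exp.congr_deriv (by simp only [expDecay, Pi.neg_apply]; ring)

lemma abs_deriv_expDecay_le {b t : ℝ} (hb : 0 ≤ b) (ht : t ∈ Set.Ico 0 1) :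
    |-(b / (1 - t) ^ 2) * expDecay b t| ≤ b * gaux b := by
  rcases hb.eq_or_lt with rfl | hb
  · simp
  have h1t : 0 < 1 - t := by linarith [ht.2]
  have hs : 0 ≤ t / (1 - t) := div_nonneg ht.1 h1t.le
  -- with `s = t / (1 - t)` one has `1 / (1 - t) = 1 + s`
  have hrw : |-(b / (1 - t) ^ 2) * expDecay b t|
      = b * ((1 + t / (1 - t)) ^ 2 * exp (-(b * (t / (1 - t))))) := by
    rw [abs_mul, abs_neg, abs_of_pos (by positivity), expDecay, abs_of_pos (exp_pos _)]
    field_simp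
    ring
  rw [hrw]
  exact mul_le_mul_of_nonneg_left (sq_one_add_mul_exp_neg_le_gaux hb hs) hb.le

lemma abs_expDecay_sub_le {b x y : ℝ} (hb : 0 ≤ b) (hx : x ∈ Set.Ico 0 1)
    (hy : y ∈ Set.Ico 0 1) : |expDecay b x - expDecay b y| ≤ b * gaux b * |x - y| := by
  have := (convex_Ico (0 : ℝ) 1).norm_image_sub_le_of_norm_hasDerivWithin_le
    (fun t ht => (hasDerivAt_expDecay b (ht.2.ne)).hasDerivWithinAt)
    (fun t ht => abs_deriv_expDecay_le hb ht) hy hx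
  simpa only [Real.norm_eq_abs] using this

lemma abs_prod_expDecay_sub_le {k : ℕ} {b : Fin k → ℝ} {p : ℝ} (hp : 0 ≤ p)
    (hb : ∀ j, 0 ≤ b j) (hbp : ∀ j, b j * gaux (b j) ≤ p) {a₁ a₂ : Fin k → ℝ}
    (ha₁ : a₁ ∈ box k) (ha₂ : a₂ ∈ box k) :
    |∏ j, expDecay (b j) (a₁ j) - ∏ j, expDecay (b j) (a₂ j)| ≤ p * √k * norm2 (a₁ - a₂) := by
  have hprod := norm_prod_sub_prod_le univ (f := fun j => expDecay (b j) (a₁ j))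
    (g := fun j => expDecay (b j) (a₂ j)) (fun j _ => abs_expDecay_le_one (hb j) (ha₁ j))
    (fun j _ => abs_expDecay_le_one (hb j) (ha₂ j))
  simp only [Real.norm_eq_abs] at hprod
  calc _ ≤ ∑ j, |expDecay (b j) (a₁ j) - expDecay (b j) (a₂ j)| := hprod
    _ ≤ ∑ j, p * |(a₁ - a₂) j| := sum_le_sum fun j _ =>
        (abs_expDecay_sub_le (hb j) (ha₁ j) (ha₂ j)).trans
          (mul_le_mul_of_nonneg_right (hbp j) (abs_nonneg _))
    _ ≤ p * √k * norm2 (a₁ - a₂) := by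
        rw [← mul_sum, mul_assoc]
        exact mul_le_mul_of_nonneg_left (sum_abs_le_sqrt_card_mul_norm2 _) hp

/-- For every `p ≥ 2` and `log 2 ≤ b ≤ p` one has `b·g(b) ≤ p`;
consequently the generative model `G_i(a) = c_i ∏_j exp(-b_j^{(i)} a_j/(1-a_j))`
with `|c_i| ≤ 1` and nonzero exponents in `[log 2, p]` is `L`-Lipschitz on `[0,1)^k`
with `L ≤ p √(Pk)`. -/
theorem stmt_7 :
    (∀ p b : ℝ, 2 ≤ p → Real.log 2 ≤ b → b ≤ p → b * gaux b ≤ p) ∧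
    (∀ (k P : ℕ) (c : Fin P → ℝ) (b : Fin P → Fin k → ℝ)
      (G : (Fin k → ℝ) → Fin P → ℝ) (p : ℝ),
      2 ≤ p →
      (∀ i, |c i| ≤ 1) →
      (∀ i j, 0 ≤ b i j) →
      (∀ i j, b i j ≠ 0 → Real.log 2 ≤ b i j ∧ b i j ≤ p) →
      (∀ a i, G a i = c i * ∏ j, Real.exp (-(b i j * (a j / (1 - a j))))) →
      ∀ a₁ ∈ box k, ∀ a₂ ∈ box k,
        norm2 (G a₁ - G a₂) ≤ p * Real.sqrt ((P : ℝ) * k) * norm2 (a₁ - a₂)) := by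
  have hgaux : ∀ p b : ℝ, 2 ≤ p → log 2 ≤ b → b ≤ p → b * gaux b ≤ p :=
    fun p b hp h1 h2 => (mul_gaux_le_max h1).trans (max_le h2 hp)
  refine ⟨hgaux, fun k P c b G p hp hc hb hbp hG a₁ ha₁ a₂ ha₂ => ?_⟩
  have hp0 : 0 ≤ p := by linarith
  have hbgaux : ∀ i j, b i j * gaux (b i j) ≤ p := fun i j => by
    rcases eq_or_ne (b i j) 0 with h | h
    · rw [h, zero_mul]; exact hp0
    · exact hgaux p _ hp (hbp i j h).1 (hbp i j h).2
  set L := p * √k * norm2 (a₁ - a₂)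
  have hcoord : ∀ i, |(G a₁ - G a₂) i| ≤ L := fun i => by
    rw [Pi.sub_apply, hG, hG, ← mul_sub, abs_mul]
    exact (mul_le_of_le_one_left (abs_nonneg _) (hc i)).trans
      (abs_prod_expDecay_sub_le hp0 (hb i) (hbgaux i) ha₁ ha₂)
  calc norm2 (G a₁ - G a₂) ≤ √P * L := norm2_le_sqrt_card_mul
        (mul_nonneg (mul_nonneg hp0 (sqrt_nonneg _)) (sqrt_nonneg _)) hcoord
    _ = p * √(P * k) * norm2 (a₁ - a₂) := by rw [sqrt_mul (Nat.cast_nonneg _)]; ring
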